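/- Let s ≥ 1 and n be natural numbers with n ≥ 2(s−1), and let p be a homogeneous real polynomial of degree n in two variables x, y satisfying Δ^s p = 0. Then there exist homogeneous harmonic polynomials h_0, h_1, …, h_{s−1}, with h_j of degree n−2j, such that p = Σ_{j=0}^{s−1} r^{2j}·h_j; equivalently, Ker(Δ^s : P_n → P_{n−2s}) = ⊕_{j=0}^{s−1} r^{2j}·H_{n−2j}. -/

import Mathlib

/-!
Induction on `s`. Suppose `Δp = ∑_{j<s} r^{2j} g_j` with `g_j` harmonic of degree `n - 2 - 2j`.
The product rule and Euler's identity give, for `g` harmonic homogeneous of degree `m`,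
`Δ(r^{2(k+1)} g) = 4(k+1)(k+1+m) r^{2k} g`; the constant is nonzero, so dividing by it lifts each
`r^{2j} g_j` to a homogeneous `q_j` of degree `n` with `Δq_j = r^{2j} g_j`. Then `p - ∑ q_j` is
harmonic and serves as `h_0`, while `h_{j+1}` is `g_j` divided by that constant.
-/

open MvPolynomial

/-- The Laplacian on polynomials in two variables. -/
noncomputable def pLap (p : MvPolynomial (Fin 2) ℝ) : MvPolynomial (Fin 2) ℝ :=
  pderiv 0 (pderiv 0 p) + pderiv 1 (pderiv 1 p)

noncomputable def pLapₗ : MvPolynomial (Fin 2) ℝ →ₗ[ℝ] MvPolynomial (Fin 2) ℝ where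
  toFun := pLap
  map_add' p q := by simp only [pLap, map_add]; ring
  map_smul' a p := by simp only [pLap, Derivation.map_smul, RingHom.id_apply, smul_add]

lemma pLap_sub (p q : MvPolynomial (Fin 2) ℝ) : pLap (p - q) = pLap p - pLap q :=
  map_sub pLapₗ p q

lemma pLap_smul (c : ℝ) (p : MvPolynomial (Fin 2) ℝ) : pLap (c • p) = c • pLap p :=
  map_smul pLapₗ c p

lemma pLap_sum {ι : Type*} (s : Finset ι) (f : ι → MvPolynomial (Fin 2) ℝ) :
    pLap (∑ i ∈ s, f i) = ∑ i ∈ s, pLap (f i) :=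
  map_sum pLapₗ f s

lemma pLap_mul (f g : MvPolynomial (Fin 2) ℝ) :
    pLap (f * g) =
      pLap f * g + 2 * (pderiv 0 f * pderiv 0 g + pderiv 1 f * pderiv 1 g) + f * pLap g := by
  simp only [pLap, Derivation.leibniz, map_add, smul_eq_mul]
  ring

lemma MvPolynomial.IsHomogeneous.smul {σ R : Type*} [CommSemiring R] {φ : MvPolynomial σ R}
    {n : ℕ} (hφ : φ.IsHomogeneous n) (c : R) : (c • φ).IsHomogeneous n :=
  (homogeneousSubmodule σ R n).smul_mem c hφ

lemma MvPolynomial.IsHomogeneous.pLap {p : MvPolynomial (Fin 2) ℝ} {n : ℕ}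
    (hp : p.IsHomogeneous n) : (_root_.pLap p).IsHomogeneous (n - 2) := by
  have h0 := (hp.pderiv (i := 0)).pderiv (i := 0)
  have h1 := (hp.pderiv (i := 1)).pderiv (i := 1)
  rw [Nat.sub_sub] at h0 h1
  exact h0.add h1

lemma MvPolynomial.IsHomogeneous.X_mul_pderiv_add_X_mul_pderiv {p : MvPolynomial (Fin 2) ℝ}
    {n : ℕ} (hp : p.IsHomogeneous n) :
    X 0 * pderiv 0 p + X 1 * pderiv 1 p = (n : MvPolynomial (Fin 2) ℝ) * p := by
  simpa [Fin.sum_univ_two, nsmul_eq_mul] using hp.sum_X_mul_pderiv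

noncomputable def rsq : MvPolynomial (Fin 2) ℝ := X 0 ^ 2 + X 1 ^ 2

lemma isHomogeneous_rsq : rsq.IsHomogeneous 2 :=
  (isHomogeneous_X_pow 0 2).add (isHomogeneous_X_pow 1 2)

lemma pderiv_rsq_pow_succ (i : Fin 2) (k : ℕ) :
    pderiv i (rsq ^ (k + 1)) =
      ((2 * (k + 1) : ℕ) : MvPolynomial (Fin 2) ℝ) * (X i * rsq ^ k) := by
  rw [pderiv_pow]
  fin_cases i <;> simp [rsq, pderiv_X] <;> ring

lemma pLap_rsq_pow_succ (k : ℕ) :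
    pLap (rsq ^ (k + 1)) = ((4 * (k + 1) ^ 2 : ℕ) : MvPolynomial (Fin 2) ℝ) * rsq ^ k := by
  have euler := (isHomogeneous_rsq.pow k).X_mul_pderiv_add_X_mul_pderiv
  simp only [pLap, pderiv_rsq_pow_succ, Derivation.leibniz, Derivation.map_natCast, smul_eq_mul,
    pderiv_X_self]
  push_cast at euler ⊢
  linear_combination (2 * ((k : MvPolynomial (Fin 2) ℝ) + 1)) * euler

lemma pLap_rsq_pow_succ_mul {g : MvPolynomial (Fin 2) ℝ} {m : ℕ} (hg : g.IsHomogeneous m)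
    (hΔg : pLap g = 0) (k : ℕ) :
    pLap (rsq ^ (k + 1) * g) = (4 * (k + 1) * (k + 1 + m) : ℝ) • (rsq ^ k * g) := by
  have euler := hg.X_mul_pderiv_add_X_mul_pderiv
  rw [pLap_mul, pLap_rsq_pow_succ, pderiv_rsq_pow_succ, pderiv_rsq_pow_succ, hΔg, smul_eq_C_mul]
  simp only [map_mul, map_add, map_natCast, map_ofNat, map_one]
  push_cast
  linear_combination (4 * ((k : MvPolynomial (Fin 2) ℝ) + 1) * rsq ^ k) * euler

def IsAlmansiExpansion (s n : ℕ) (p : MvPolynomial (Fin 2) ℝ)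
    (h : ℕ → MvPolynomial (Fin 2) ℝ) : Prop :=
  (∀ j, j < s → (h j).IsHomogeneous (n - 2 * j) ∧ pLap (h j) = 0) ∧
    p = ∑ j ∈ Finset.range s, rsq ^ j * h j

lemma exists_isAlmansiExpansion_succ_of_pLap {s n : ℕ} (hn : 2 * s ≤ n)
    {p : MvPolynomial (Fin 2) ℝ} (hp : p.IsHomogeneous n) {g : ℕ → MvPolynomial (Fin 2) ℝ}
    (hg : IsAlmansiExpansion s (n - 2) (pLap p) g) :
    ∃ h, IsAlmansiExpansion (s + 1) n p h := by
  obtain ⟨hg, hsum⟩ := hg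
  set c : ℕ → ℝ := fun j => (4 * (j + 1) * (j + 1 + (n - 2 - 2 * j : ℕ)) : ℝ)⁻¹
  have hlift : ∀ j < s, pLap (c j • (rsq ^ (j + 1) * g j)) = rsq ^ j * g j := fun j hj => by
    rw [pLap_smul, pLap_rsq_pow_succ_mul (hg j hj).1 (hg j hj).2, smul_smul,
      inv_mul_cancel₀ (by positivity), one_smul]
  have hdeg : ∀ j < s, (rsq ^ (j + 1) * g j).IsHomogeneous n := fun j hj => by
    convert (isHomogeneous_rsq.pow (j + 1)).mul (hg j hj).1 using 1
    omega
  set q := ∑ j ∈ Finset.range s, c j • (rsq ^ (j + 1) * g j)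
  have hq : q.IsHomogeneous n :=
    IsHomogeneous.sum _ _ _ fun j hj => (hdeg j (Finset.mem_range.mp hj)).smul (c j)
  have hΔq : pLap q = pLap p := by
    rw [hsum, pLap_sum]
    exact Finset.sum_congr rfl fun j hj => hlift j (Finset.mem_range.mp hj)
  refine ⟨fun | 0 => p - q | j + 1 => c j • g j, ?_, ?_⟩
  · rintro (_ | j) hj
    · exact ⟨by simpa using hp.sub hq, by rw [pLap_sub, hΔq, sub_self]⟩
    · have hj : j < s := by omega
      refine ⟨?_, by rw [pLap_smul, (hg j hj).2, smul_zero]⟩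
      convert (hg j hj).1.smul (c j) using 1
      omega
  · rw [Finset.sum_range_succ']
    simp only [pow_zero, one_mul, mul_smul_comm, q]
    abel

theorem almansi_expansion_homogeneous_general
    (s n : ℕ) (hn : 2 * (s - 1) ≤ n)
    (p : MvPolynomial (Fin 2) ℝ) (hp : p.IsHomogeneous n) (hker : pLap^[s] p = 0) :
    ∃ h : ℕ → MvPolynomial (Fin 2) ℝ,
      (∀ j, j < s → (h j).IsHomogeneous (n - 2 * j) ∧ pLap (h j) = 0) ∧
      p = ∑ j ∈ Finset.range s, (X 0 ^ 2 + X 1 ^ 2) ^ j * h j := by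
  induction s generalizing n p with
  | zero => exact ⟨0, by simp, by simpa using hker⟩
  | succ s ih =>
    obtain ⟨g, hg⟩ := ih (n - 2) (by omega) (pLap p) hp.pLap hker
    exact exists_isAlmansiExpansion_succ_of_pLap (by omega) hp hg

/-- Almansi expansion, homogeneous case. Let `s ≥ 1`, `n ≥ 2(s−1)`, and let
`p` be homogeneous of degree `n` with `Δ^s p = 0`. Then there are homogeneous harmonic
polynomials `h_j` of degree `n − 2j` (`0 ≤ j < s`) with `p = Σ_{j<s} r^{2j}·h_j`. -/
theorem almansi_expansion_homogeneous
    (s n : ℕ) (hs : 1 ≤ s) (hn : 2 * (s - 1) ≤ n)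
    (p : MvPolynomial (Fin 2) ℝ) (hp : p.IsHomogeneous n) (hker : pLap^[s] p = 0) :
    ∃ h : ℕ → MvPolynomial (Fin 2) ℝ,
      (∀ j, j < s → (h j).IsHomogeneous (n - 2 * j) ∧ pLap (h j) = 0) ∧
      p = ∑ j ∈ Finset.range s, (X 0 ^ 2 + X 1 ^ 2) ^ j * h j :=
  almansi_expansion_homogeneous_general s n hn p hp hker
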